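/- Let k, γ, m₀, m₁ be real numbers with m₀ > 0, m₁ > 0 and 2k > γ. Let M : ℝ → (6×6 real matrices) be a differentiable matrix-valued function such that for every t: M(t) is symmetric and invertible, m₀‖x‖² ≤ xᵀ M(t) x ≤ m₁‖x‖² for all x ∈ ℝ⁶, and |xᵀ M'(t) x| ≤ γ‖x‖² for all x ∈ ℝ⁶. Let T ∈ ℝ⁶ be a constant vector (the true external interaction wrench) and let T̂ : ℝ → ℝ⁶ be a differentiable function satisfying the observer dynamics T̂'(t) = k · M(t)⁻¹ · (T - T̂(t)) for all t. Then T̂(t) → T as t → ∞. -/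

import Mathlib

open Matrix

/-- Euclidean norm of a vector in `ℝⁿ` (identified with `Fin n → ℝ`). -/
noncomputable def eNorm {n : ℕ} (x : Fin n → ℝ) : ℝ := Real.sqrt (x ⬝ᵥ x)

noncomputable def matDeriv {n : ℕ} (M : ℝ → Matrix (Fin n) (Fin n) ℝ) (t : ℝ) :
    Matrix (Fin n) (Fin n) ℝ :=
  Matrix.of fun i j => deriv (fun s => M s i j) t

/-! With the error `e = T - T̂`, take the Lyapunov function `V = eᵀ M e`. Since `ė = -k M⁻¹ e` and
`M` is symmetric, both terms of `V'` containing `ė` equal `-k ‖e‖²`, so `V' = -2k ‖e‖² + eᵀ M' e`.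
The rate bound and `V ≤ m₁ ‖e‖²` give `V' ≤ -((2k - γ) / m₁) V`, hence `V` decays exponentially,
and `m₀ ‖e‖² ≤ V` forces `e → 0`. -/

section Calculus

variable {ι : Type*} [Fintype ι]

theorem HasDerivAt.dotProduct {u v : ℝ → ι → ℝ} {u' v' : ι → ℝ} {t : ℝ}
    (hu : HasDerivAt u u' t) (hv : HasDerivAt v v' t) :
    HasDerivAt (fun s => u s ⬝ᵥ v s) (u' ⬝ᵥ v t + u t ⬝ᵥ v') t := by
  have hterm : ∀ i ∈ Finset.univ, HasDerivAt (fun s => u s i * v s i)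
      (u' i * v t i + u t i * v' i) t := fun i _ =>
    (hasDerivAt_pi.mp hu i).mul (hasDerivAt_pi.mp hv i)
  have hsum := HasDerivAt.fun_sum hterm
  rw [Finset.sum_add_distrib] at hsum
  exact hsum

theorem HasDerivAt.mulVec {κ : Type*} {A : ℝ → Matrix κ ι ℝ} {A' : Matrix κ ι ℝ}
    {v : ℝ → ι → ℝ} {v' : ι → ℝ} {t : ℝ}
    (hA : ∀ i j, HasDerivAt (fun s => A s i j) (A' i j) t) (hv : HasDerivAt v v' t) :
    HasDerivAt (fun s => A s *ᵥ v s) (A' *ᵥ v t + A t *ᵥ v') t :=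
  hasDerivAt_pi.mpr fun i => (hasDerivAt_pi.mpr (hA i)).dotProduct hv

end Calculus

theorem hasDerivAt_matDeriv {n : ℕ} {M : ℝ → Matrix (Fin n) (Fin n) ℝ}
    (hM : ∀ i j, Differentiable ℝ fun t => M t i j) (t : ℝ) (i j : Fin n) :
    HasDerivAt (fun s => M s i j) (matDeriv M t i j) t :=
  (hM i j t).hasDerivAt

theorem eNorm_sq {n : ℕ} (x : Fin n → ℝ) : eNorm x ^ 2 = x ⬝ᵥ x :=
  Real.sq_sqrt (Finset.sum_nonneg fun i _ => mul_self_nonneg (x i))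

theorem norm_le_eNorm {n : ℕ} (x : Fin n → ℝ) : ‖x‖ ≤ eNorm x := by
  refine (pi_norm_le_iff_of_nonneg (Real.sqrt_nonneg _)).mpr fun i => ?_
  refine Real.abs_le_sqrt ?_
  rw [sq]
  exact Finset.single_le_sum (fun j _ => mul_self_nonneg (x j)) (Finset.mem_univ i)

theorem tendsto_zero_of_eNorm_sq_le {α : Type*} {l : Filter α} {n : ℕ} {f : α → Fin n → ℝ}
    {g : α → ℝ} (hfg : ∀ᶠ a in l, eNorm (f a) ^ 2 ≤ g a) (hg : Filter.Tendsto g l (nhds 0)) :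
    Filter.Tendsto f l (nhds 0) := by
  have hsq : Filter.Tendsto (fun a => ‖f a‖ ^ 2) l (nhds 0) :=
    tendsto_of_tendsto_of_tendsto_of_le_of_le' tendsto_const_nhds hg
      (Filter.Eventually.of_forall fun a => sq_nonneg _)
      (hfg.mono fun a h => le_trans (pow_le_pow_left₀ (norm_nonneg _) (norm_le_eNorm _) 2) h)
  have hnorm := (Real.continuous_sqrt.tendsto 0).comp hsq
  rw [Real.sqrt_zero] at hnorm
  exact tendsto_zero_iff_norm_tendsto_zero.mpr
    (hnorm.congr fun a => Real.sqrt_sq (norm_nonneg _))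

theorem le_mul_exp_neg_of_hasDerivAt_le {V V' : ℝ → ℝ} {c : ℝ}
    (hV : ∀ t, HasDerivAt V (V' t) t) (hV' : ∀ t, V' t ≤ -c * V t) {t : ℝ} (ht : 0 ≤ t) :
    V t ≤ V 0 * Real.exp (-(c * t)) := by
  have hW : ∀ s, HasDerivAt (fun s => V s * Real.exp (c * s))
      (V' s * Real.exp (c * s) + V s * (Real.exp (c * s) * c)) s := fun s =>
    (hV s).mul (by simpa using ((hasDerivAt_id s).const_mul c).exp)
  have hanti : Antitone fun s => V s * Real.exp (c * s) := by
    refine antitone_of_deriv_nonpos (fun s => (hW s).differentiableAt) fun s => ?_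
    rw [(hW s).deriv]
    nlinarith [hV' s, Real.exp_pos (c * s)]
  have := hanti ht
  simp only [mul_zero, Real.exp_zero, mul_one] at this
  rwa [Real.exp_neg, ← div_eq_mul_inv, le_div_iff₀ (Real.exp_pos _)]

theorem Matrix.IsSymm.inv_mulVec_dotProduct_mulVec {ι : Type*} [Fintype ι] [DecidableEq ι]
    {A : Matrix ι ι ℝ} (hA : A.IsSymm) (hdet : IsUnit A.det) (x : ι → ℝ) :
    A⁻¹ *ᵥ x ⬝ᵥ A *ᵥ x = x ⬝ᵥ x := by
  rw [dotProduct_mulVec, ← mulVec_transpose, hA, mulVec_mulVec, mul_nonsing_inv _ hdet,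
    one_mulVec]

theorem hasDerivAt_dotProduct_mulVec_of_observer {ι : Type*} [Fintype ι] [DecidableEq ι]
    {M : ℝ → Matrix ι ι ℝ} {M' : Matrix ι ι ℝ} {e : ℝ → ι → ℝ} {k t : ℝ}
    (hM : ∀ i j, HasDerivAt (fun s => M s i j) (M' i j) t) (hsymm : (M t).IsSymm)
    (hdet : IsUnit (M t).det) (he : HasDerivAt e (-(k • (M t)⁻¹ *ᵥ e t)) t) :
    HasDerivAt (fun s => e s ⬝ᵥ M s *ᵥ e s) (-(2 * k) * (e t ⬝ᵥ e t) + e t ⬝ᵥ M' *ᵥ e t) t := by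
  convert he.dotProduct (HasDerivAt.mulVec hM he) using 1
  rw [neg_dotProduct, smul_dotProduct, hsymm.inv_mulVec_dotProduct_mulVec hdet, mulVec_neg,
    mulVec_smul, mulVec_mulVec, mul_nonsing_inv _ hdet, one_mulVec, dotProduct_add,
    dotProduct_neg, dotProduct_smul, smul_eq_mul]
  ring

/-- Theorem 1 of the paper: the wrench observer
`T̂' = k M⁻¹ (T - T̂)` with a constant true wrench `T`, gain condition `2k > γ`, uniform
positive-definiteness bounds on `M`, and inertia-rate bound `γ`, ensures `T̂(t) → T`. -/
theorem observer_wrench_convergence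
    (k γ m₀ m₁ : ℝ) (hm₀ : 0 < m₀) (hm₁ : 0 < m₁) (hk : 2 * k > γ)
    (M : ℝ → Matrix (Fin 6) (Fin 6) ℝ)
    (hMdiff : ∀ i j, Differentiable ℝ fun t => M t i j)
    (hMsymm : ∀ t, (M t).IsSymm)
    (hMinv : ∀ t, IsUnit (M t).det)
    (hMlb : ∀ t, ∀ x : Fin 6 → ℝ, m₀ * eNorm x ^ 2 ≤ x ⬝ᵥ (M t).mulVec x)
    (hMub : ∀ t, ∀ x : Fin 6 → ℝ, x ⬝ᵥ (M t).mulVec x ≤ m₁ * eNorm x ^ 2)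
    (hMrate : ∀ t, ∀ x : Fin 6 → ℝ, |x ⬝ᵥ (matDeriv M t).mulVec x| ≤ γ * eNorm x ^ 2)
    (T : Fin 6 → ℝ) (That : ℝ → Fin 6 → ℝ) (hThat : Differentiable ℝ That)
    (hdyn : ∀ t, deriv That t = k • (M t)⁻¹.mulVec (T - That t)) :
    Filter.Tendsto That Filter.atTop (nhds T) := by
  set e : ℝ → Fin 6 → ℝ := fun t => T - That t
  have he : ∀ t, HasDerivAt e (-(k • (M t)⁻¹ *ᵥ e t)) t := fun t => by
    have h := (hasDerivAt_const t T).sub (hThat t).hasDerivAt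
    rwa [hdyn t, zero_sub] at h
  set V : ℝ → ℝ := fun t => e t ⬝ᵥ M t *ᵥ e t
  have hV : ∀ t, HasDerivAt V (-(2 * k) * (e t ⬝ᵥ e t) + e t ⬝ᵥ matDeriv M t *ᵥ e t) t :=
    fun t => hasDerivAt_dotProduct_mulVec_of_observer (hasDerivAt_matDeriv hMdiff t)
      (hMsymm t) (hMinv t) (he t)
  set c := (2 * k - γ) / m₁
  have hc : 0 < c := div_pos (by linarith) hm₁
  have hdissip : ∀ t, -(2 * k) * (e t ⬝ᵥ e t) + e t ⬝ᵥ matDeriv M t *ᵥ e t ≤ -c * V t := by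
    intro t
    have hrate := (abs_le.mp (hMrate t (e t))).2
    have hub := hMub t (e t)
    rw [eNorm_sq] at hrate hub
    have : c * V t ≤ (2 * k - γ) * (e t ⬝ᵥ e t) := by
      rw [div_mul_eq_mul_div, div_le_iff₀ hm₁, mul_assoc]
      exact mul_le_mul_of_nonneg_left (by linarith) (by linarith)
    linarith
  have hexp : Filter.Tendsto (fun t => V 0 / m₀ * Real.exp (-(c * t))) Filter.atTop (nhds 0) := by
    simpa using (Real.tendsto_exp_neg_atTop_nhds_zero.comp
      (Filter.tendsto_id.const_mul_atTop hc)).const_mul (V 0 / m₀)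
  have hdecay : Filter.Tendsto e Filter.atTop (nhds 0) := by
    refine tendsto_zero_of_eNorm_sq_le ?_ hexp
    filter_upwards [Filter.eventually_ge_atTop 0] with t ht
    rw [div_mul_eq_mul_div, le_div_iff₀ hm₀, mul_comm]
    exact (hMlb t (e t)).trans (le_mul_exp_neg_of_hasDerivAt_le hV hdissip ht)
  simpa [e] using (tendsto_const_nhds (x := T)).sub hdecay
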